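/- Let T be a closed, densely defined right-linear operator on a Hilbert module V over ℝ_d, and s ∈ ρ_S(T*) = ρ_S(T). Then Q_s[T]* = Q_s[T*], hence Q_s[T*]^{-1} = (Q_s[T]^{-1})*, and moreover (T Q_s[T]^{-1})* = T* Q_s[T*]^{-1} (the right-hand side being the everywhere-defined closure of Q_s[T*]^{-1} T*). -/

import Mathlib

noncomputable section

open scoped BigOperators

/-- The negative-definite quadratic form on `Fin d → ℝ`, so that the Clifford
algebra generators satisfy `eᵢ² = -1` and anticommute. -/
def negQ (d : ℕ) : QuadraticForm ℝ (Fin d → ℝ) :=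
  QuadraticMap.weightedSumSquares ℝ (fun _ : Fin d => (-1 : ℝ))

/-- The real Clifford algebra ℝ_d. -/
abbrev Cl (d : ℕ) : Type := CliffordAlgebra (negQ d)

/-- The paravector `s₀ + s₁e₁ + ⋯ + s_d e_d`. -/
def pv {d : ℕ} (s₀ : ℝ) (v : Fin d → ℝ) : Cl d :=
  algebraMap ℝ (Cl d) s₀ + CliffordAlgebra.ι (negQ d) v

/-- The Clifford conjugate `s₀ - s₁e₁ - ⋯ - s_d e_d` of a paravector. -/
def pvConj {d : ℕ} (s₀ : ℝ) (v : Fin d → ℝ) : Cl d :=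
  algebraMap ℝ (Cl d) s₀ - CliffordAlgebra.ι (negQ d) v

/-- The squared modulus `s₀² + s₁² + ⋯ + s_d²` of a paravector. -/
def pvNormSq {d : ℕ} (s₀ : ℝ) (v : Fin d → ℝ) : ℝ := s₀ ^ 2 + ∑ i, v i ^ 2

/-- Right multiplication `v ↦ v·a` on a right Clifford module `V`. -/
def rmul {d : ℕ} {V : Type*} [AddCommGroup V] [Module (Cl d)ᵐᵒᵖ V]
    (v : V) (a : Cl d) : V := MulOpposite.op a • v

/-- A right-linear operator `T : dom(T) ⊆ V → V` on a right Clifford module. -/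
structure RightLinearOp (d : ℕ) (V : Type*) [AddCommGroup V]
    [Module (Cl d)ᵐᵒᵖ V] where
  dom : Set V
  toFun : V → V
  zero_mem : (0 : V) ∈ dom
  add_mem : ∀ ⦃v w : V⦄, v ∈ dom → w ∈ dom → v + w ∈ dom
  smul_mem : ∀ (a : (Cl d)ᵐᵒᵖ) ⦃v : V⦄, v ∈ dom → a • v ∈ dom
  map_add' : ∀ ⦃v w : V⦄, v ∈ dom → w ∈ dom → toFun (v + w) = toFun v + toFun w
  map_smul' : ∀ (a : (Cl d)ᵐᵒᵖ) ⦃v : V⦄, v ∈ dom → toFun (a • v) = a • toFun v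

namespace RightLinearOp

variable {d : ℕ} {V : Type*} [NormedAddCommGroup V] [NormedSpace ℝ V]
  [Module (Cl d)ᵐᵒᵖ V] [IsScalarTower ℝ (Cl d)ᵐᵒᵖ V]

/-- `T` is a closed operator: its graph is closed in `V × V`. -/
def IsClosedOp (T : RightLinearOp d V) : Prop :=
  IsClosed {p : V × V | p.1 ∈ T.dom ∧ p.2 = T.toFun p.1}

/-- The domain of `T²`. -/
def dom2 (T : RightLinearOp d V) : Set V := {v | v ∈ T.dom ∧ T.toFun v ∈ T.dom}

/-- The operator `Q_s[T] = T² - 2s₀T + |s|²`, as a function (to be used on `dom2`);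
it depends only on `s₀` and `|s|²` (denoted `nsq`). -/
def qs (T : RightLinearOp d V) (s₀ nsq : ℝ) (v : V) : V :=
  T.toFun (T.toFun v) - (2 * s₀) • T.toFun v + nsq • v

/-- `Qi` is a bounded, everywhere defined, two-sided inverse of
`Q_s[T] : dom(T²) → V`. -/
def IsQInv (T : RightLinearOp d V) (s₀ nsq : ℝ) (Qi : V →L[ℝ] V) : Prop :=
  (∀ v : V, Qi v ∈ T.dom2) ∧
  (∀ v ∈ T.dom2, Qi (T.qs s₀ nsq v) = v) ∧
  (∀ v : V, T.qs s₀ nsq (Qi v) = v)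

/-- The paravector `s = (s₀, sv)` belongs to the `S`-resolvent set of `T`,
i.e. `Q_s[T]⁻¹ ∈ B(V)`. -/
def InRhoS (T : RightLinearOp d V) (s₀ : ℝ) (sv : Fin d → ℝ) : Prop :=
  ∃ Qi : V →L[ℝ] V, T.IsQInv s₀ (pvNormSq s₀ sv) Qi

end RightLinearOp

/-- Clifford conjugation on ℝ_d (composite of involution and reversal). -/
def clConj {d : ℕ} (a : Cl d) : Cl d :=
  CliffordAlgebra.reverse (CliffordAlgebra.involute a)

/-!
By the closed graph theorem `A = T Q_s[T]⁻¹` is bounded, and `Q_s[T]⁻¹` commutes with `T` on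
`dom T`. Pairing against the dense set `dom T` shows that `(Q_s[T]⁻¹)* u ∈ dom T*` with
`T* (Q_s[T]⁻¹)* u = A* u`, and that `A* u ∈ dom T*` with
`T* A* u = u + 2 s₀ A* u - |s|² (Q_s[T]⁻¹)* u`. Hence `(Q_s[T]⁻¹)*` is a right inverse of
`Q_s[T*]`; formal adjointness of `Q_s[T]` and `Q_s[T*]` makes it a left inverse, and every `w`
in the domain of `Q_s[T]*` is of the form `(Q_s[T]⁻¹)* u`.
-/

open scoped InnerProductSpace

namespace RightLinearOp

section Module

variable {d : ℕ} {V : Type*} [AddCommGroup V] [Module ℝ V] [Module (Cl d)ᵐᵒᵖ V]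
  [IsScalarTower ℝ (Cl d)ᵐᵒᵖ V] (T : RightLinearOp d V)

theorem real_smul_mem (r : ℝ) {v : V} (hv : v ∈ T.dom) : r • v ∈ T.dom := by
  simpa only [smul_one_smul] using T.smul_mem (r • 1) hv

theorem map_real_smul (r : ℝ) {v : V} (hv : v ∈ T.dom) :
    T.toFun (r • v) = r • T.toFun v := by
  simpa only [smul_one_smul] using T.map_smul' (r • 1) hv

end Module

section Normed

variable {d : ℕ} {V : Type*} [NormedAddCommGroup V] [NormedSpace ℝ V]
  [Module (Cl d)ᵐᵒᵖ V] {T : RightLinearOp d V} {s₀ nsq : ℝ} {Qi : V →L[ℝ] V}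

theorem IsQInv.apply_mem_dom (hQ : T.IsQInv s₀ nsq Qi) (v : V) : Qi v ∈ T.dom :=
  (hQ.1 v).1

theorem IsQInv.toFun_toFun_apply (hQ : T.IsQInv s₀ nsq Qi) (v : V) :
    T.toFun (T.toFun (Qi v)) = v + (2 * s₀) • T.toFun (Qi v) + (-nsq) • Qi v := by
  have h := hQ.2.2 v
  unfold qs at h
  linear_combination (norm := module) h

variable [IsScalarTower ℝ (Cl d)ᵐᵒᵖ V]

def compCLM [CompleteSpace V] (hT : T.IsClosedOp) (B : V →L[ℝ] V) (hB : ∀ v, B v ∈ T.dom) :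
    V →L[ℝ] V :=
  ContinuousLinearMap.ofIsClosedGraph (g :=
    { toFun := fun v => T.toFun (B v)
      map_add' := fun v w => by simp only [map_add, T.map_add' (hB v) (hB w)]
      map_smul' := fun r v => by
        simp only [map_smul, T.map_real_smul r (hB v), RingHom.id_apply] })
    (by
      have : IsClosed ((fun p : V × V => (B p.1, p.2)) ⁻¹'
          {p : V × V | p.1 ∈ T.dom ∧ p.2 = T.toFun p.1}) :=
        hT.preimage ((B.continuous.comp continuous_fst).prodMk continuous_snd)
      convert this using 1
      ext p
      simp [hB p.1])

@[simp]
theorem compCLM_apply [CompleteSpace V] (hT : T.IsClosedOp) (B : V →L[ℝ] V)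
    (hB : ∀ v, B v ∈ T.dom) (v : V) : compCLM hT B hB v = T.toFun (B v) :=
  rfl

-- `Q_s[T]` maps `T (Qi v)` to `T v`.
theorem IsQInv.apply_toFun (hQ : T.IsQInv s₀ nsq Qi) {v : V} (hv : v ∈ T.dom) :
    Qi (T.toFun v) = T.toFun (Qi v) := by
  obtain ⟨hQv, hTQv⟩ := hQ.1 v
  have hsq := hQ.toFun_toFun_apply v
  have hmem : v + (2 * s₀) • T.toFun (Qi v) ∈ T.dom := T.add_mem hv (T.real_smul_mem _ hTQv)
  have hx : T.toFun (Qi v) ∈ T.dom2 :=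
    ⟨hTQv, hsq ▸ T.add_mem hmem (T.real_smul_mem _ hQv)⟩
  have hqs : T.qs s₀ nsq (T.toFun (Qi v)) = T.toFun v := by
    simp only [qs, hsq, T.map_add' hmem (T.real_smul_mem _ hQv),
      T.map_add' hv (T.real_smul_mem _ hTQv), T.map_real_smul _ hTQv, T.map_real_smul _ hQv]
    module
  rw [← hQ.2.1 _ hx, hqs]

end Normed

section Inner

variable {d : ℕ} {V : Type*} [NormedAddCommGroup V] [InnerProductSpace ℝ V]
  [Module (Cl d)ᵐᵒᵖ V]

structure IsAdjointOf (Tstar T : RightLinearOp d V) : Prop where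
  dom_eq : Tstar.dom = {w : V | ∃ u : V, ∀ v ∈ T.dom, ⟪u, v⟫_ℝ = ⟪w, T.toFun v⟫_ℝ}
  inner_toFun : ∀ w ∈ Tstar.dom, ∀ v ∈ T.dom, ⟪Tstar.toFun w, v⟫_ℝ = ⟪w, T.toFun v⟫_ℝ

variable {T Tstar : RightLinearOp d V}

theorem IsAdjointOf.mem_dom_and_toFun_eq (h : Tstar.IsAdjointOf T) (hdense : Dense T.dom)
    {u w : V} (huw : ∀ v ∈ T.dom, ⟪u, v⟫_ℝ = ⟪w, T.toFun v⟫_ℝ) :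
    w ∈ Tstar.dom ∧ Tstar.toFun w = u := by
  have hw : w ∈ Tstar.dom := h.dom_eq ▸ ⟨u, huw⟩
  refine ⟨hw, hdense.eq_of_inner_left ℝ fun v hv => ?_⟩
  rw [h.inner_toFun w hw v hv, huw v hv]

theorem IsAdjointOf.inner_qs (h : Tstar.IsAdjointOf T) (s₀ nsq : ℝ) {w v : V}
    (hw : w ∈ Tstar.dom2) (hv : v ∈ T.dom2) :
    ⟪Tstar.qs s₀ nsq w, v⟫_ℝ = ⟪w, T.qs s₀ nsq v⟫_ℝ := by
  simp only [qs, inner_add_left, inner_sub_left, inner_add_right, inner_sub_right,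
    real_inner_smul_left, real_inner_smul_right, h.inner_toFun _ hw.2 _ hv.1,
    h.inner_toFun _ hw.1 _ hv.2, h.inner_toFun _ hw.1 _ hv.1]

variable [CompleteSpace V] {s₀ nsq : ℝ} {Qi : V →L[ℝ] V}

theorem IsAdjointOf.adjoint_qs_dom_eq (h : Tstar.IsAdjointOf T) (hQ : T.IsQInv s₀ nsq Qi)
    (hQ' : Tstar.IsQInv s₀ nsq Qi.adjoint) :
    {w : V | ∃ u : V, ∀ v ∈ T.dom2, ⟪u, v⟫_ℝ = ⟪w, T.qs s₀ nsq v⟫_ℝ} = Tstar.dom2 := by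
  ext w
  constructor
  · rintro ⟨u, hu⟩
    have hw : w = Qi.adjoint u := ext_inner_right ℝ fun x => by
      rw [ContinuousLinearMap.adjoint_inner_left, hu _ (hQ.1 x), hQ.2.2 x]
    exact hw ▸ hQ'.1 u
  · exact fun hw => ⟨Tstar.qs s₀ nsq w, fun v hv => h.inner_qs s₀ nsq hw hv⟩

variable [IsScalarTower ℝ (Cl d)ᵐᵒᵖ V]

theorem IsAdjointOf.toFun_adjoint_apply (h : Tstar.IsAdjointOf T) (hdense : Dense T.dom)
    (hT : T.IsClosedOp) (hQ : T.IsQInv s₀ nsq Qi) (u : V) :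
    Qi.adjoint u ∈ Tstar.dom ∧
      Tstar.toFun (Qi.adjoint u) = (compCLM hT Qi hQ.apply_mem_dom).adjoint u :=
  h.mem_dom_and_toFun_eq hdense fun v hv => by
    rw [ContinuousLinearMap.adjoint_inner_left, ContinuousLinearMap.adjoint_inner_left,
      compCLM_apply, hQ.apply_toFun hv]

theorem IsAdjointOf.toFun_adjoint_compCLM_apply (h : Tstar.IsAdjointOf T)
    (hdense : Dense T.dom) (hT : T.IsClosedOp) (hQ : T.IsQInv s₀ nsq Qi) (u : V) :
    (compCLM hT Qi hQ.apply_mem_dom).adjoint u ∈ Tstar.dom ∧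
      Tstar.toFun ((compCLM hT Qi hQ.apply_mem_dom).adjoint u)
        = u + (2 * s₀) • (compCLM hT Qi hQ.apply_mem_dom).adjoint u + (-nsq) • Qi.adjoint u :=
  h.mem_dom_and_toFun_eq hdense fun v hv => by
    simp only [inner_add_left, real_inner_smul_left, ContinuousLinearMap.adjoint_inner_left,
      compCLM_apply, hQ.apply_toFun hv, hQ.toFun_toFun_apply v, inner_add_right,
      real_inner_smul_right]

theorem IsQInv.adjoint (hQ : T.IsQInv s₀ nsq Qi) (h : Tstar.IsAdjointOf T)
    (hdense : Dense T.dom) (hT : T.IsClosedOp) : Tstar.IsQInv s₀ nsq Qi.adjoint := by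
  have hQ' := h.toFun_adjoint_apply hdense hT hQ
  have hA := h.toFun_adjoint_compCLM_apply hdense hT hQ
  refine ⟨fun u => ⟨(hQ' u).1, (hQ' u).2 ▸ (hA u).1⟩, fun w hw => ?_, fun u => ?_⟩
  · refine ext_inner_right ℝ fun x => ?_
    rw [ContinuousLinearMap.adjoint_inner_left, h.inner_qs s₀ nsq hw (hQ.1 x), hQ.2.2 x]
  · rw [qs, (hQ' u).2, (hA u).2]
    module

end Inner

end RightLinearOp

open RightLinearOp in
/-- for a closed, densely defined right-linear operator `T` on a
Hilbert module and `s ∈ ρ_S(T*) = ρ_S(T)`: `Q_s[T]* = Q_s[T*]`, hence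
`Q_s[T*]⁻¹ = (Q_s[T]⁻¹)*`, and `(T Q_s[T]⁻¹)* = T* Q_s[T*]⁻¹`. -/
theorem adjoint_of_qs_and_resolvent {d : ℕ} {V : Type*}
    [NormedAddCommGroup V] [InnerProductSpace ℝ V] [CompleteSpace V]
    [Module (Cl d)ᵐᵒᵖ V] [IsScalarTower ℝ (Cl d)ᵐᵒᵖ V]
    (T Tstar : RightLinearOp d V) (hT : T.IsClosedOp) (hdense : Dense T.dom)
    -- `Tstar` is the adjoint of `T`:
    (hdom : Tstar.dom
      = {w : V | ∃ u : V, ∀ v ∈ T.dom, (inner ℝ u v : ℝ) = inner ℝ w (T.toFun v)})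
    (hadj : ∀ w ∈ Tstar.dom, ∀ v ∈ T.dom,
      (inner ℝ (Tstar.toFun w) v : ℝ) = inner ℝ w (T.toFun v))
    -- `s ∈ ρ_S(T)`, with `Q_s[T]⁻¹ = QiT`:
    (s₀ : ℝ) (sv : Fin d → ℝ) (QiT : V →L[ℝ] V)
    (hQiT : T.IsQInv s₀ (pvNormSq s₀ sv) QiT) :
    -- `Q_s[T*]⁻¹ = (Q_s[T]⁻¹)*`:
    Tstar.IsQInv s₀ (pvNormSq s₀ sv) (ContinuousLinearMap.adjoint QiT) ∧
    -- `Q_s[T]* = Q_s[T*]`: equality of domains ...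
    ({w : V | ∃ u : V, ∀ v ∈ T.dom2,
        (inner ℝ u v : ℝ) = inner ℝ w (T.qs s₀ (pvNormSq s₀ sv) v)}
      = Tstar.dom2) ∧
    -- ... and of actions:
    (∀ w ∈ Tstar.dom2, ∀ v ∈ T.dom2,
      (inner ℝ (Tstar.qs s₀ (pvNormSq s₀ sv) w) v : ℝ)
        = inner ℝ w (T.qs s₀ (pvNormSq s₀ sv) v)) ∧
    -- `(T Q_s[T]⁻¹)* = T* Q_s[T*]⁻¹`:
    (∀ w v : V,
      (inner ℝ (Tstar.toFun (ContinuousLinearMap.adjoint QiT w)) v : ℝ)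
        = inner ℝ w (T.toFun (QiT v))) := by
  have h : Tstar.IsAdjointOf T := ⟨hdom, hadj⟩
  have hQ' := hQiT.adjoint h hdense hT
  refine ⟨hQ', h.adjoint_qs_dom_eq hQiT hQ', fun w hw v hv => h.inner_qs _ _ hw hv,
    fun w v => ?_⟩
  rw [(h.toFun_adjoint_apply hdense hT hQiT w).2, ContinuousLinearMap.adjoint_inner_left,
    compCLM_apply]
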